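/- arXiv:2602.19287 — 2 statements merged into one kernel-verified Lean document; each statement's English description precedes it below -/
import Mathlib

section
/- Second telescoping identity for the multipower variance constant: let k ≥ 2 be an integer, let q_1, …, q_k be real numbers and let λ : ℝ → ℝ be any function; for 0 ≤ h ≤ k − j and 1 ≤ j ≤ k − 1 set a_{h,j} = ∏_{l=h+j+1}^k λ(q_l) · ∏_{l=h+1}^k λ(q_l) · ∏_{l=1}^h λ(q_l + q_{l+j}) · ∏_{l=1}^j λ(q_l). Then 2 ∑_{j=1}^{k−1} ∑_{h=1}^{k−j} ( λ(q_{h+j} + q_h) − λ(q_{h+j}) λ(q_h) ) · ∏_{l=h+j+1}^k λ(q_l) · ∏_{l=h+1}^k λ(q_l) · ∏_{l=1}^{h−1} λ(q_l + q_{l+j}) · ∏_{l=1}^j λ(q_l) = −2(k−1) (∏_{l=1}^k λ(q_l))² + 2 ∑_{j=1}^{k−1} ∏_{l=k−j+1}^k λ(q_l) · ∏_{l=1}^{k−j} λ(q_l + q_{l+j}) · ∏_{l=1}^j λ(q_l). -/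
open MeasureTheory ProbabilityTheory Filter Finset Topology

noncomputable section

/-- Discretized range of a path `f` over `[0,1]` based on the grid `{0, 1/m, …, 1}`:
`s_{f,m} = max_{s,t ∈ {0,…,m}} (f(t/m) - f(s/m))`. -/
def discRange (m : ℕ) (f : ℝ → ℝ) : ℝ :=
  Finset.sup' (Finset.univ : Finset (Fin (m + 1) × Fin (m + 1))) Finset.univ_nonempty
    fun p => f ((p.2 : ℕ) / (m : ℝ)) - f ((p.1 : ℕ) / (m : ℝ))

/-- A standard Brownian motion on `[0,∞)`: continuous paths started at `0`, independent
increments, and Gaussian increments `W_t - W_s ~ N(0, t - s)` for `0 ≤ s ≤ t`. -/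
structure IsStdBrownian {Ω : Type*} [MeasurableSpace Ω] (P : Measure Ω) (W : ℝ → Ω → ℝ) :
    Prop where
  meas : ∀ t, Measurable (W t)
  start : ∀ ω, W 0 ω = 0
  cont : ∀ ω, ContinuousOn (fun t => W t ω) (Set.Ici 0)
  indep : ∀ (n : ℕ) (t : ℕ → ℝ), (∀ i, 0 ≤ t i) → Monotone t →
    iIndepFun
      (fun i : Fin n => fun ω => W (t (i + 1)) ω - W (t i) ω) P
  gauss : ∀ s t : ℝ, 0 ≤ s → s ≤ t →
    Measure.map (fun ω => W t ω - W s ω) P = gaussianReal 0 (Real.toNNReal (t - s))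

/-- `λ_{r,m} = E[(s_{W,m})^r]`, the `r`-th moment of the discretized range of `W`. -/
def lambdaC {Ω : Type*} [MeasurableSpace Ω] (P : Measure Ω) (W : ℝ → Ω → ℝ)
    (r : ℝ) (m : ℕ) : ℝ :=
  ∫ ω, (discRange m fun t => W t ω) ^ r ∂P

/-- The `i`-th block range at level `(n, m)` of a path `f`:
`s_i^{n,m}(f) = max_{0 ≤ s,t ≤ m} (f((i-1)/n + t/(nm)) - f((i-1)/n + s/(nm)))`. -/
def blockRange (n m : ℕ) (f : ℝ → ℝ) (i : ℕ) : ℝ :=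
  Finset.sup' (Finset.univ : Finset (Fin (m + 1) × Fin (m + 1))) Finset.univ_nonempty
    fun p => f (((i : ℝ) - 1) / n + (p.2 : ℕ) / ((n : ℝ) * m)) -
             f (((i : ℝ) - 1) / n + (p.1 : ℕ) / ((n : ℝ) * m))

/-- Realized range-based multipower variation with powers `q 1, …, q k` and scaling
constants `lam (q j)`. -/
def RMV (q : ℕ → ℝ) (k : ℕ) (lam : ℝ → ℝ) (n m : ℕ) (f : ℝ → ℝ) : ℝ :=
  ((n : ℝ) / ((n : ℝ) - (k : ℝ) + 1)) * (n : ℝ) ^ ((∑ j ∈ Finset.Icc 1 k, q j) / 2 - 1) *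
    ∑ i ∈ Finset.Icc 1 (n - k + 1), ∏ j ∈ Finset.Icc 1 k,
      (blockRange n m f (i + j - 1)) ^ (q j) / lam (q j)

/-- The asymptotic variance constant `Λ^m_{(q_1,…,q_k)}`, expressed through the scaling
constants `lam r = λ_{r,m}`. -/
def LambdaC (lam : ℝ → ℝ) (q : ℕ → ℝ) (k : ℕ) : ℝ :=
  ((∏ j ∈ Finset.Icc 1 k, lam (2 * q j)) -
      (2 * (k : ℝ) - 1) * ∏ j ∈ Finset.Icc 1 k, (lam (q j)) ^ 2 +
      2 * ∑ h ∈ Finset.Icc 1 (k - 1),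
        (∏ j ∈ Finset.Icc 1 h, lam (q j)) * (∏ j ∈ Finset.Icc (k - h + 1) k, lam (q j)) *
          ∏ j ∈ Finset.Icc 1 (k - h), lam (q j + q (j + h))) /
    ∏ j ∈ Finset.Icc 1 k, (lam (q j)) ^ 2

/-- The (biased, under jumps) realized range-based variance
`RRV_b^{n,m}(f) = (1/λ_{2,m}) ∑_{i=1}^n (s_i^{n,m}(f))²`. -/
def RRVb (lam2 : ℝ) (n m : ℕ) (f : ℝ → ℝ) : ℝ :=
  (1 / lam2) * ∑ i ∈ Finset.Icc 1 n, (blockRange n m f i) ^ 2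

/-- The realized range-based tripower variance
`RTV^{n,m}(f) = (n/(n-2)) ∑_{i=1}^{n-2} ∏_{j=1}^3 (s_{i+j-1}^{n,m}(f))^{2/3} / λ_{2/3,m}`. -/
def RTV (lam23 : ℝ) (n m : ℕ) (f : ℝ → ℝ) : ℝ :=
  ((n : ℝ) / ((n : ℝ) - 2)) * ∑ i ∈ Finset.Icc 1 (n - 2), ∏ j ∈ Finset.Icc 1 3,
    (blockRange n m f (i + j - 1)) ^ ((2 : ℝ) / 3) / lam23

/-- Second telescoping identity for the multipower variance constant. -/
theorem telescoping_double_sum (k : ℕ) (hk : 2 ≤ k) (q : ℕ → ℝ) (lam : ℝ → ℝ) :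
    2 * ∑ j ∈ Finset.Icc 1 (k - 1), ∑ h ∈ Finset.Icc 1 (k - j),
        (lam (q (h + j) + q h) - lam (q (h + j)) * lam (q h)) *
          (∏ l ∈ Finset.Icc (h + j + 1) k, lam (q l)) *
          (∏ l ∈ Finset.Icc (h + 1) k, lam (q l)) *
          (∏ l ∈ Finset.Icc 1 (h - 1), lam (q l + q (l + j))) *
          ∏ l ∈ Finset.Icc 1 j, lam (q l) =
      -2 * ((k : ℝ) - 1) * (∏ l ∈ Finset.Icc 1 k, lam (q l)) ^ 2 +
        2 * ∑ j ∈ Finset.Icc 1 (k - 1),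
          (∏ l ∈ Finset.Icc (k - j + 1) k, lam (q l)) *
            (∏ l ∈ Finset.Icc 1 (k - j), lam (q l + q (l + j))) *
            ∏ l ∈ Finset.Icc 1 j, lam (q l) := by
  have hbot : ∀ (g : ℕ → ℝ) (a b : ℕ), a ≤ b →
      ∏ l ∈ Finset.Icc a b, g l = g a * ∏ l ∈ Finset.Icc (a + 1) b, g l := by
    intro g a b hab
    rw [← Finset.Ico_add_one_right_eq_Icc, Finset.prod_eq_prod_Ico_succ_bot (by omega), Finset.Ico_add_one_right_eq_Icc]
  set F : ℕ → ℕ → ℝ := fun j h =>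
    (∏ l ∈ Finset.Icc (h + j + 1) k, lam (q l)) *
    (∏ l ∈ Finset.Icc (h + 1) k, lam (q l)) *
    (∏ l ∈ Finset.Icc 1 h, lam (q l + q (l + j))) *
    ∏ l ∈ Finset.Icc 1 j, lam (q l) with hF
  have hinner : ∀ j ∈ Finset.Icc 1 (k - 1),
      ∑ h ∈ Finset.Icc 1 (k - j),
        (lam (q (h + j) + q h) - lam (q (h + j)) * lam (q h)) *
          (∏ l ∈ Finset.Icc (h + j + 1) k, lam (q l)) *
          (∏ l ∈ Finset.Icc (h + 1) k, lam (q l)) *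
          (∏ l ∈ Finset.Icc 1 (h - 1), lam (q l + q (l + j))) *
          ∏ l ∈ Finset.Icc 1 j, lam (q l) = F j (k - j) - F j 0 := by
    intro j hj
    simp only [Finset.mem_Icc] at hj
    have hterm : ∀ h ∈ Finset.Icc 1 (k - j),
        (lam (q (h + j) + q h) - lam (q (h + j)) * lam (q h)) *
          (∏ l ∈ Finset.Icc (h + j + 1) k, lam (q l)) *
          (∏ l ∈ Finset.Icc (h + 1) k, lam (q l)) *
          (∏ l ∈ Finset.Icc 1 (h - 1), lam (q l + q (l + j))) *
          ∏ l ∈ Finset.Icc 1 j, lam (q l) = F j h - F j (h - 1) := by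
      intro h hh
      simp only [Finset.mem_Icc] at hh
      obtain ⟨h1, h2⟩ := hh
      have hjk : j ≤ k := le_trans hj.2 (Nat.sub_le k 1)
      have hhjk : h + j ≤ k := by omega
      have hhk : h ≤ k := by omega
      have e1 : ∏ l ∈ Finset.Icc (h - 1 + j + 1) k, lam (q l)
          = lam (q (h + j)) * ∏ l ∈ Finset.Icc (h + j + 1) k, lam (q l) := by
        have : h - 1 + j + 1 = h + j := by omega
        rw [this, hbot _ _ _ hhjk]
      have e2 : ∏ l ∈ Finset.Icc (h - 1 + 1) k, lam (q l)
          = lam (q h) * ∏ l ∈ Finset.Icc (h + 1) k, lam (q l) := by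
        have : h - 1 + 1 = h := by omega
        rw [this, hbot _ _ _ hhk]
      have e3 : ∏ l ∈ Finset.Icc 1 h, lam (q l + q (l + j))
          = (∏ l ∈ Finset.Icc 1 (h - 1), lam (q l + q (l + j))) * lam (q h + q (h + j)) := by
        have hh' : h = (h - 1) + 1 := by omega
        rw [hh', Finset.prod_Icc_succ_top (by omega)]
        rw [← hh']
      simp only [hF]
      rw [e1, e2, e3, add_comm (q (h + j)) (q h)]
      ring
    rw [Finset.sum_congr rfl hterm]
    have htel := Finset.sum_range_sub (fun i => F j i) (k - j)
    rw [← Finset.Ico_add_one_right_eq_Icc, Finset.sum_Ico_eq_sum_range]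
    simp only [Nat.add_sub_cancel] at *
    refine Eq.trans (Finset.sum_congr rfl ?_) htel
    intro i _
    have : 1 + i = i + 1 := by omega
    rw [this]
    simp
  rw [Finset.sum_congr rfl hinner, Finset.sum_sub_distrib]
  have hF0 : ∀ j ∈ Finset.Icc 1 (k - 1), F j 0 = (∏ l ∈ Finset.Icc 1 k, lam (q l)) ^ 2 := by
    intro j hj
    simp only [Finset.mem_Icc] at hj
    have hjk : j ≤ k := le_trans hj.2 (Nat.sub_le k 1)
    have hsplit : (∏ l ∈ Finset.Icc 1 j, lam (q l)) * ∏ l ∈ Finset.Icc (j + 1) k, lam (q l)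
        = ∏ l ∈ Finset.Icc 1 k, lam (q l) := by
      rw [show (1:ℕ) = 0 + 1 from rfl, Finset.Icc_add_one_left_eq_Ioc, Finset.Icc_add_one_left_eq_Ioc, zero_add, Finset.Icc_add_one_left_eq_Ioc]
      exact Finset.prod_Ioc_consecutive _ (Nat.zero_le j) hjk
    simp only [hF, zero_add]
    rw [Finset.Icc_eq_empty (by omega : ¬ (1:ℕ) ≤ 0), Finset.prod_empty, ← hsplit]
    ring
  have hFk : ∀ j ∈ Finset.Icc 1 (k - 1), F j (k - j) =
      (∏ l ∈ Finset.Icc (k - j + 1) k, lam (q l)) *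
        (∏ l ∈ Finset.Icc 1 (k - j), lam (q l + q (l + j))) *
        ∏ l ∈ Finset.Icc 1 j, lam (q l) := by
    intro j hj
    simp only [Finset.mem_Icc] at hj
    have hjk : j ≤ k := le_trans hj.2 (Nat.sub_le k 1)
    have h1 : k - j + j + 1 = k + 1 := by omega
    simp only [hF, h1]
    rw [Finset.Icc_eq_empty (by omega), Finset.prod_empty]
    ring
  rw [Finset.sum_congr rfl hF0, Finset.sum_congr rfl hFk, Finset.sum_const, Nat.card_Icc]
  have : ((k - 1 + 1 - 1 : ℕ) : ℝ) = (k : ℝ) - 1 := by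
    have : k - 1 + 1 - 1 = k - 1 := by omega
    rw [this, Nat.cast_sub (by omega)]; norm_num
  rw [nsmul_eq_mul, this]
  ring

end
end

section
/- Exact recovery of squared jumps by squared ranges for a pure-jump path: let N_J ∈ ℕ, let 0 < τ_1 < … < τ_{N_J} < 1 be deterministic jump times and J_1, …, J_{N_J} real numbers, and let p_t = ∑_{i=1}^{N_J} J_i 1_{τ_i ≤ t}. Then there exists n_0 ∈ ℕ such that for all n ≥ n_0 and all integers m ≥ 1, the sum of squared block ranges ∑_{i=1}^n (s_i^{n,m}(p))² equals ∑_{i=1}^{N_J} J_i² exactly. -/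
open MeasureTheory ProbabilityTheory Filter Finset Topology

noncomputable section

/-- Exact recovery of squared jumps by squared ranges for a pure-jump
path: for `p_t = ∑_{i=1}^{N_J} J_i 1_{τ_i ≤ t}` with `0 < τ_1 < … < τ_{N_J} < 1`, there
is `n₀` such that for all `n ≥ n₀` and all `m ≥ 1`,
`∑_{i=1}^n (s_i^{n,m}(p))² = ∑_{i=1}^{N_J} J_i²` exactly. -/
theorem pure_jump_exact (NJ : ℕ) (τ J : ℕ → ℝ)
    (hτ : ∀ i ∈ Finset.Icc 1 NJ, 0 < τ i ∧ τ i < 1)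
    (hτmono : ∀ i ∈ Finset.Icc 1 NJ, ∀ j ∈ Finset.Icc 1 NJ, i < j → τ i < τ j) :
    ∃ n₀ : ℕ, ∀ n ≥ n₀, ∀ m : ℕ, 1 ≤ m →
      ∑ i ∈ Finset.Icc 1 n, (blockRange n m
          (fun t => ∑ i ∈ Finset.Icc 1 NJ, if τ i ≤ t then J i else 0) i) ^ 2 =
        ∑ i ∈ Finset.Icc 1 NJ, (J i) ^ 2 := by
  classical
  set T := Finset.Icc 1 NJ with hT
  obtain ⟨δ, hδ0, hδ⟩ : ∃ δ : ℝ, 0 < δ ∧ ∀ j ∈ T, ∀ k ∈ T, j < k → δ ≤ τ k - τ j := by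
    set P := (T ×ˢ T).filter (fun p : ℕ × ℕ => p.1 < p.2) with hP
    rcases P.eq_empty_or_nonempty with h | h
    · refine ⟨1, one_pos, ?_⟩
      intro j hj k hk hjk
      exfalso
      have : (j, k) ∈ P := by simp [hP, hj, hk, hjk, Finset.mem_product]
      simp [h] at this
    · refine ⟨P.inf' h (fun p => τ p.2 - τ p.1), ?_, ?_⟩
      · rw [Finset.lt_inf'_iff]
        intro p hp
        simp only [hP, Finset.mem_filter, Finset.mem_product] at hp
        have := hτmono p.1 hp.1.1 p.2 hp.1.2 hp.2
        linarith
      · intro j hj k hk hjk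
        have hmem : (j, k) ∈ P := by simp [hP, hj, hk, hjk, Finset.mem_product]
        exact Finset.inf'_le _ hmem
  obtain ⟨n₁, hn₁⟩ := exists_nat_one_div_lt hδ0
  refine ⟨n₁ + 1, ?_⟩
  intro n hn m hm
  have hn1 : 1 ≤ n := le_trans (by omega) hn
  have hnR : (0:ℝ) < n := by exact_mod_cast Nat.pos_of_ne_zero (by omega)
  have hmR : (0:ℝ) < m := by exact_mod_cast Nat.pos_of_ne_zero (by omega)
  have h1n : (1:ℝ)/n < δ := by
    refine lt_of_le_of_lt ?_ hn₁
    have h1 : ((n₁:ℝ) + 1) ≤ (n:ℝ) := by exact_mod_cast hn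
    have h2 : (0:ℝ) < (n₁:ℝ) + 1 := by positivity
    exact one_div_le_one_div_of_le h2 h1
  -- block index of each jump
  set b : ℕ → ℕ := fun j => ⌈(n:ℝ) * τ j⌉₊ with hb
  have hbpos : ∀ j ∈ T, 1 ≤ b j := by
    intro j hj
    have h0 := (hτ j hj).1
    exact Nat.ceil_pos.mpr (by positivity)
  have hble : ∀ j ∈ T, b j ≤ n := by
    intro j hj
    have h1 := (hτ j hj).2
    exact Nat.ceil_le.mpr (by nlinarith)
  have hhigh : ∀ j ∈ T, τ j ≤ (b j : ℝ) / n := by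
    intro j hj
    rw [le_div_iff₀ hnR]
    have := Nat.le_ceil ((n:ℝ) * τ j)
    linarith
  have hlow : ∀ j ∈ T, ((b j : ℝ) - 1) / n < τ j := by
    intro j hj
    rw [div_lt_iff₀ hnR]
    have h0 := (hτ j hj).1
    have := Nat.ceil_lt_add_one (le_of_lt (show (0:ℝ) < (n:ℝ) * τ j by positivity))
    simp only [hb] at *
    linarith
  -- injectivity of b on T
  have hinj2 : ∀ j ∈ T, ∀ k ∈ T, j < k → b j ≠ b k := by
    intro j hj k hk hjk heq
    have h1 := hδ j hj k hk hjk
    have h2 := hlow j hj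
    have h3 := hhigh k hk
    rw [← heq] at h3
    have : τ k - τ j < 1 / n := by
      have : (b j : ℝ)/n - ((b j : ℝ) - 1)/n = 1/n := by field_simp; ring
      linarith
    linarith
  have hinj : ∀ j ∈ T, ∀ k ∈ T, b j = b k → j = k := by
    intro j hj k hk heq
    rcases lt_trichotomy j k with h | h | h
    · exact absurd heq (hinj2 j hj k hk h)
    · exact h
    · exact absurd heq.symm (hinj2 k hk j hj h)
  -- grid points
  set xg : ℕ → ℕ → ℝ := fun i k => ((i:ℝ) - 1)/n + (k:ℝ)/((n:ℝ)*m) with hxg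
  have hx0 : ∀ (i k : ℕ), ((i:ℝ) - 1)/n ≤ xg i k := by
    intro i k
    have : (0:ℝ) ≤ (k:ℝ)/((n:ℝ)*m) := by positivity
    simp only [hxg]; linarith
  have hx1 : ∀ i, ∀ k ≤ m, xg i k ≤ (i:ℝ)/n := by
    intro i k hk
    have hk' : (k:ℝ) ≤ (m:ℝ) := by exact_mod_cast hk
    have h1 : (k:ℝ)/((n:ℝ)*m) ≤ 1/n := by
      rw [div_le_div_iff₀ (by positivity) hnR]
      nlinarith
    have h2 : ((i:ℝ) - 1)/n + 1/n = (i:ℝ)/n := by field_simp; ring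
    simp only [hxg]; linarith
  have hxm : ∀ i, xg i m = (i:ℝ)/n := by
    intro i
    simp only [hxg]
    rw [mul_comm (n:ℝ) (m:ℝ), div_mul_eq_div_div]
    rw [div_self (ne_of_gt hmR)]
    field_simp; ring
  have hxz : ∀ i, xg i 0 = ((i:ℝ) - 1)/n := by
    intro i; simp [hxg]
  -- indicator is constant on blocks not containing the jump
  have hiff : ∀ j ∈ T, ∀ i : ℕ, b j ≠ i → ∀ k ≤ m, (τ j ≤ xg i k ↔ b j < i) := by
    intro j hj i hne k hk
    rcases lt_or_gt_of_ne hne with h | h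
    · have hcast : (b j : ℝ) ≤ (i:ℝ) - 1 := by
        have : (b j : ℕ) + 1 ≤ i := h
        have : ((b j : ℕ) : ℝ) + 1 ≤ (i:ℝ) := by exact_mod_cast this
        linarith
      have : τ j ≤ xg i k := by
        refine le_trans (hhigh j hj) (le_trans ?_ (hx0 i k))
        gcongr
      simp [this, h]
    · have hcast : (i:ℝ) ≤ (b j : ℝ) - 1 := by
        have : i + 1 ≤ b j := h
        have : (i:ℝ) + 1 ≤ ((b j : ℕ) : ℝ) := by exact_mod_cast this
        linarith
      have hlt : xg i k < τ j := by
        refine lt_of_le_of_lt (le_trans (hx1 i k hk) ?_) (hlow j hj)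
        gcongr
      simp [not_le.mpr hlt, not_lt.mpr (le_of_lt h), le_of_lt h]
  set p : ℝ → ℝ := fun t => ∑ j ∈ T, if τ j ≤ t then J j else 0 with hp
  -- per-block computation
  have key : ∀ i ∈ Finset.Icc 1 n,
      (blockRange n m p i)^2 = ∑ j ∈ T.filter (fun j => b j = i), (J j)^2 := by
    intro i hi
    have hgrid : ∀ pr : Fin (m+1) × Fin (m+1),
        p (((i : ℝ) - 1) / n + ((pr.2 : ℕ):ℝ) / ((n : ℝ) * m)) -
        p (((i : ℝ) - 1) / n + ((pr.1 : ℕ):ℝ) / ((n : ℝ) * m)) =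
        p (xg i (pr.2 : ℕ)) - p (xg i (pr.1 : ℕ)) := by
      intro pr; rfl
    rcases (T.filter (fun j => b j = i)).eq_empty_or_nonempty with hfe | ⟨j0, hj0⟩
    · -- no jump in this block
      have hnojump : ∀ j ∈ T, b j ≠ i := by
        intro j hj heq
        have : j ∈ T.filter (fun j => b j = i) := Finset.mem_filter.mpr ⟨hj, heq⟩
        simp [hfe] at this
      have hconstp : ∀ k ≤ m, p (xg i k) = ∑ j ∈ T, if b j < i then J j else 0 := by
        intro k hk
        refine Finset.sum_congr rfl ?_
        intro j hj
        exact if_congr (hiff j hj i (hnojump j hj) k hk) rfl rfl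
      have hzero : blockRange n m p i = 0 := by
        rw [blockRange]
        rw [Finset.sup'_congr Finset.univ_nonempty rfl
          (g := fun _ : Fin (m+1) × Fin (m+1) => (0:ℝ)) ?_]
        · exact Finset.sup'_const _ 0
        · intro pr _
          have h2 := hconstp (pr.2 : ℕ) (Nat.lt_succ_iff.mp pr.2.isLt)
          have h1 := hconstp (pr.1 : ℕ) (Nat.lt_succ_iff.mp pr.1.isLt)
          show p (xg i (pr.2 : ℕ)) - p (xg i (pr.1 : ℕ)) = 0
          rw [h1, h2, sub_self]
      rw [hzero, hfe]
      simp
    · -- exactly one jump j0 in this block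
      have hj0T : j0 ∈ T := (Finset.mem_filter.mp hj0).1
      have hj0b : b j0 = i := (Finset.mem_filter.mp hj0).2
      have huniq : ∀ j ∈ T, b j = i → j = j0 := by
        intro j hj heq
        exact hinj j hj j0 hj0T (heq.trans hj0b.symm)
      have hfil : T.filter (fun j => b j = i) = {j0} := by
        apply Finset.eq_singleton_iff_unique_mem.mpr
        exact ⟨hj0, fun j hj => huniq j (Finset.mem_filter.mp hj).1 (Finset.mem_filter.mp hj).2⟩
      have hval : ∀ k ≤ m, p (xg i k) =
          (if τ j0 ≤ xg i k then J j0 else 0) +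
          ∑ j ∈ T.erase j0, (if b j < i then J j else 0) := by
        intro k hk
        simp only [hp]
        rw [← Finset.add_sum_erase T _ hj0T]
        congr 1
        refine Finset.sum_congr rfl ?_
        intro j hj
        have hjT := Finset.mem_of_mem_erase hj
        have hjne : b j ≠ i := by
          intro heq
          exact (Finset.ne_of_mem_erase hj) (huniq j hjT heq)
        exact if_congr (hiff j hjT i hjne k hk) rfl rfl
      have hτhi : τ j0 ≤ xg i m := by rw [hxm]; rw [← hj0b]; exact hhigh j0 hj0T
      have hτlo : ¬ (τ j0 ≤ xg i 0) := by
        rw [hxz]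
        push_neg
        rw [← hj0b]
        exact_mod_cast hlow j0 hj0T
      have habs : blockRange n m p i = |J j0| := by
        apply le_antisymm
        · rw [blockRange]
          apply Finset.sup'_le
          intro pr _
          rw [hgrid pr, hval _ (Nat.lt_succ_iff.mp pr.2.isLt),
            hval _ (Nat.lt_succ_iff.mp pr.1.isLt)]
          have := le_abs_self (J j0)
          have := neg_abs_le (J j0)
          split_ifs <;> simp <;> linarith
        · rw [abs_le']
          constructor
          · have hmem := Finset.mem_univ
              ((⟨0, Nat.succ_pos m⟩, ⟨m, Nat.lt_succ_self m⟩) : Fin (m+1) × Fin (m+1))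
            refine le_trans ?_ (Finset.le_sup' _ hmem)
            show J j0 ≤ p (xg i m) - p (xg i 0)
            rw [hval m le_rfl, hval 0 (Nat.zero_le m), if_pos hτhi, if_neg hτlo]
            simp
          · have hmem := Finset.mem_univ
              ((⟨m, Nat.lt_succ_self m⟩, ⟨0, Nat.succ_pos m⟩) : Fin (m+1) × Fin (m+1))
            refine le_trans ?_ (Finset.le_sup' _ hmem)
            show -(J j0) ≤ p (xg i 0) - p (xg i m)
            rw [hval m le_rfl, hval 0 (Nat.zero_le m), if_pos hτhi, if_neg hτlo]
            simp
      rw [habs, sq_abs, hfil, Finset.sum_singleton]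
  rw [Finset.sum_congr rfl key]
  exact Finset.sum_fiberwise_of_maps_to
    (fun j hj => Finset.mem_Icc.mpr ⟨hbpos j hj, hble j hj⟩) _

end
end
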